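/- arXiv:1708.00527 — 6 statements merged into one kernel-verified Lean document; each statement's English description precedes it below -/
import Mathlib

section
/- For positive integers m and k, the conjectured lower bound L(m;k) = ⌈m(2^k−1)/k⌉ equals the upper bound U(m;k) = 2^{q+k−1} + r (where m = 2^q + r with 0 ≤ r < 2^q) if and only if either k = 1, or k = 2 and m = 2^{q+1} − 1 for some q ≥ 0. -/
/-- The conjectured lower bound `L(m;k) = ⌈m(2^k−1)/k⌉`. -/
def GR_L (m k : ℕ) : ℕ := (m * (2 ^ k - 1) + (k - 1)) / k

/-- The upper bound `U(m;k) = 2^(q+k−1) + r` where `m = 2^q + r`, `0 ≤ r < 2^q`. -/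
def GR_U (m k : ℕ) : ℕ := 2 ^ (Nat.log 2 m + k - 1) + (m - 2 ^ (Nat.log 2 m))

lemma two_le_pow_aux (n : ℕ) (h : 2 ≤ n) : n + 2 ≤ 2 ^ n := by
  induction n with
  | zero => omega
  | succ p ih =>
    rcases Nat.lt_or_ge p 2 with hp | hp
    · rcases (by omega : p = 0 ∨ p = 1) with rfl | rfl
      · omega
      · norm_num
    · have h1 := ih hp
      have h2 : 1 ≤ 2 ^ p := Nat.one_le_two_pow
      rw [pow_succ]
      omega

lemma key_ineq (A r B P k : ℕ) (hr : r + 1 ≤ A) (hB : B + 1 = 2 * P)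
    (hk : 4 ≤ k) (hPk : k + 1 ≤ P) :
    (A + r) * B + (k - 1) < (A * P + r) * k := by
  obtain ⟨s, hs⟩ : ∃ s, A = r + s + 1 := ⟨A - r - 1, by omega⟩
  obtain ⟨k', hk'⟩ : ∃ k', k = k' + 4 := ⟨k - 4, by omega⟩
  subst hs hk'
  have h3 : k' + 4 - 1 = k' + 3 := rfl
  rw [h3]
  have h1 : k' * (k' + 5) ≤ k' * P := Nat.mul_le_mul_left k' (by omega)
  nlinarith [Nat.zero_le (r * P * k'), Nat.zero_le (s * P * k'), Nat.zero_le (s * P),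
    Nat.zero_le (r * k'), Nat.zero_le (r * P), Nat.zero_le s, Nat.zero_le r]

theorem stmt0 (m k : ℕ) (hm : 1 ≤ m) (hk : 1 ≤ k) :
    GR_L m k = GR_U m k ↔ k = 1 ∨ (k = 2 ∧ ∃ q : ℕ, m = 2 ^ (q + 1) - 1) := by
  set q := Nat.log 2 m with hqdef
  have hq1 : 2 ^ q ≤ m := Nat.pow_log_le_self 2 (by omega)
  have hq2 : m < 2 ^ (q + 1) := Nat.lt_pow_succ_log_self (by norm_num) m
  have hpq : (2 : ℕ) ^ (q + 1) = 2 * 2 ^ q := by ring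
  rcases (by omega : k = 1 ∨ k = 2 ∨ 3 ≤ k) with rfl | rfl | hk3
  · -- k = 1
    have hL : GR_L m 1 = m := by simp [GR_L]
    have hU : GR_U m 1 = m := by
      rw [GR_U, ← hqdef]
      have : q + 1 - 1 = q := rfl
      rw [this]
      omega
    rw [hL, hU]
    simp
  · -- k = 2
    have hL : GR_L m 2 = (m * 3 + 1) / 2 := by norm_num [GR_L]
    have hU : GR_U m 2 = 2 * 2 ^ q + (m - 2 ^ q) := by
      rw [GR_U, ← hqdef]
      have : q + 2 - 1 = q + 1 := rfl
      rw [this, hpq]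
    rw [hL, hU]
    constructor
    · intro h
      exact Or.inr ⟨rfl, q, by omega⟩
    · rintro (h | ⟨-, q', hq'⟩)
      · exact absurd h (by norm_num)
      · have h1 : (1:ℕ) ≤ 2 ^ q' := Nat.one_le_two_pow
        have hpq' : (2 : ℕ) ^ (q' + 1) = 2 * 2 ^ q' := by ring
        have hqq : q = q' := by
          rw [hqdef, hq']
          exact Nat.log_eq_of_pow_le_of_lt_pow (by omega) (by omega)
        rw [hqq]
        omega
  · -- k ≥ 3 : strict inequality GR_L < GR_U
    have hlt : GR_L m k < GR_U m k := by
      rw [GR_L, GR_U, ← hqdef, Nat.div_lt_iff_lt_mul (show 0 < k by omega)]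
      have hsplit : (2:ℕ) ^ (q + k - 1) = 2 ^ q * 2 ^ (k - 1) := by
        rw [show q + k - 1 = q + (k - 1) by omega, pow_add]
      have h2k : (2:ℕ) ^ k = 2 * 2 ^ (k - 1) := by
        conv_lhs => rw [show k = (k - 1) + 1 by omega]
        ring
      rw [hsplit]
      rcases (by omega : k = 3 ∨ 4 ≤ k) with rfl | hk4
      · norm_num
        omega
      · have hPk : k + 1 ≤ 2 ^ (k - 1) := by
          have := two_le_pow_aux (k - 1) (by omega)
          omega
        have h2k1 : (1:ℕ) ≤ 2 ^ k := Nat.one_le_two_pow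
        have hB : (2 ^ k - 1) + 1 = 2 * 2 ^ (k - 1) := by omega
        have hr : (m - 2 ^ q) + 1 ≤ 2 ^ q := by omega
        have hkey := key_ineq (2 ^ q) (m - 2 ^ q) (2 ^ k - 1) (2 ^ (k - 1)) k hr hB hk4 hPk
        have hmeq : 2 ^ q + (m - 2 ^ q) = m := by omega
        rw [hmeq] at hkey
        exact hkey
    constructor
    · intro h; omega
    · rintro (rfl | ⟨rfl, -⟩) <;> omega
end

section
/- In the polynomial ring 𝔽₂[u₁,…,u_k], the product of all nonzero 𝔽₂-linear forms, ∏_{0 ≠ α ∈ 𝔽₂^k} (α₁u₁ + ⋯ + α_k u_k), equals the sum ∑_{σ ∈ S_k} u_{σ(1)}^{2^{k−1}} u_{σ(2)}^{2^{k−2}} ⋯ u_{σ(k)}^{1}. -/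
open MvPolynomial Finset

noncomputable section DicksonAux

abbrev FF : Type := AlgebraicClosure (ZMod 2)

def phi : ZMod 2 →+* FF := algebraMap _ _

instance : CharP FF 2 := charP_of_injective_algebraMap phi.injective 2

lemma phi_cases (b : ZMod 2) : phi b = 0 ∨ phi b = 1 := by
  have : b = 0 ∨ b = 1 := by revert b; decide
  rcases this with rfl | rfl
  · left; simp
  · right; simp

lemma phi_pow (b : ZMod 2) (n : ℕ) (hn : n ≠ 0) : phi b ^ n = phi b := by
  rcases phi_cases b with h | h <;> rw [h] <;> simp [zero_pow hn]


/-- If `∑ w j * z j = 0` with `w j ∈ {0,1}` and `w ≠ 0`, the "Moore" matrix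
`z j ^ 2 ^ e i` has zero determinant. -/
lemma det_zero_of_comb {k : ℕ} (z : Fin k → FF) (e : Fin k → ℕ) (w : Fin k → FF)
    (hw : ∀ j, w j = 0 ∨ w j = 1) (hw0 : w ≠ 0) (h : ∑ j, w j * z j = 0) :
    (Matrix.of fun i j : Fin k => z j ^ 2 ^ (e i)).det = 0 := by
  rw [← Matrix.exists_mulVec_eq_zero_iff]
  refine ⟨w, hw0, ?_⟩
  funext i
  have : ∀ j, w j = w j ^ 2 ^ (e i) := by
    intro j; rcases hw j with h' | h' <;> simp [h', zero_pow (by positivity : (2:ℕ) ^ e i ≠ 0)]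
  calc ∑ j, z j ^ 2 ^ (e i) * w j = ∑ j, (w j * z j) ^ 2 ^ (e i) := by
        refine Finset.sum_congr rfl fun j _ => ?_
        rw [mul_pow, ← this j, mul_comm]
      _ = (∑ j, w j * z j) ^ 2 ^ (e i) := (sum_pow_char_pow 2 (e i) Finset.univ fun j => w j * z j).symm
      _ = 0 := by rw [h, zero_pow (by positivity)]

lemma det_eq_permsum (k : ℕ) (x : Fin k → FF) :
    (Matrix.of fun i j : Fin k => x j ^ 2 ^ (k - 1 - (i : ℕ))).det =
      ∑ σ : Equiv.Perm (Fin k), ∏ i : Fin k, x (σ i) ^ 2 ^ (k - 1 - (i : ℕ)) := by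
  rw [Matrix.det_apply]
  have hsmul : ∀ (u : ℤˣ) (z : FF), u • z = z := by
    intro u z
    rcases Int.units_eq_one_or u with rfl | rfl
    · simp
    · simp [Units.smul_def, CharTwo.neg_eq]
  rw [show ∀ (f : Equiv.Perm (Fin k) → FF), (∑ σ, (Equiv.Perm.sign σ) • f σ) = ∑ σ, f σ from
    fun f => Finset.sum_congr rfl fun σ _ => hsmul _ _]
  refine Fintype.sum_equiv (Equiv.inv (Equiv.Perm (Fin k))) _ _ fun σ => ?_
  simp only [Equiv.inv_apply]
  calc ∏ i, Matrix.of (fun i j : Fin k => x j ^ 2 ^ (k - 1 - (i:ℕ))) (σ i) i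
      = ∏ i, x i ^ 2 ^ (k - 1 - ((σ i : Fin k) : ℕ)) := rfl
    _ = ∏ i, x (σ⁻¹ i) ^ 2 ^ (k - 1 - ((σ (σ⁻¹ i) : Fin k) : ℕ)) :=
        (Equiv.prod_comp σ⁻¹ (fun i => x i ^ 2 ^ (k - 1 - ((σ i : Fin k) : ℕ)))).symm
    _ = ∏ i, x (σ⁻¹ i) ^ 2 ^ (k - 1 - (i : ℕ)) := by simp
lemma cons_zero_eq_zero_iff {k : ℕ} (β : Fin k → ZMod 2) :
    Fin.cons 0 β = (0 : Fin (k+1) → ZMod 2) ↔ β = 0 := by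
  constructor
  · intro h; funext i; exact congrFun h i.succ
  · rintro rfl; funext i; refine Fin.cases ?_ ?_ i <;> simp


lemma prod_split (k : ℕ) (x : Fin (k+1) → FF) :
    ∏ α ∈ univ.filter (fun α : Fin (k+1) → ZMod 2 => α ≠ 0), (∑ i, phi (α i) * x i)
    = (∏ β ∈ univ.filter (fun β : Fin k → ZMod 2 => β ≠ 0), (∑ i, phi (β i) * x i.succ))
      * ∏ β : Fin k → ZMod 2, (x 0 + ∑ i, phi (β i) * x i.succ) := by
  rw [← Finset.prod_filter_mul_prod_filter_not
    (univ.filter (fun α : Fin (k+1) → ZMod 2 => α ≠ 0)) (fun α => α 0 = 0)]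
  congr 1
  · refine Finset.prod_nbij' (fun α => Fin.tail α) (fun β => Fin.cons 0 β) ?_ ?_ ?_ ?_ ?_
    · intro α hα
      simp only [mem_filter, mem_univ, true_and] at hα ⊢
      intro h
      exact hα.1 (by rw [← Fin.cons_self_tail α, hα.2, h]; exact (cons_zero_eq_zero_iff 0).mpr rfl)
    · intro β hβ
      simp only [mem_filter, mem_univ, true_and] at hβ ⊢
      exact ⟨fun h => hβ ((cons_zero_eq_zero_iff β).mp h), Fin.cons_zero _ _⟩
    · intro α hα
      simp only [mem_filter, mem_univ, true_and] at hα
      rw [← hα.2]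
      exact Fin.cons_self_tail α
    · intro β hβ; exact Fin.tail_cons _ _
    · intro α hα
      simp only [mem_filter, mem_univ, true_and] at hα
      rw [Fin.sum_univ_succ, hα.2]
      simp [Fin.tail]
  · refine Finset.prod_nbij' (fun α => Fin.tail α) (fun β => Fin.cons 1 β) ?_ ?_ ?_ ?_ ?_
    · intro α hα; exact mem_univ _
    · intro β hβ
      simp only [mem_filter, mem_univ, true_and]
      constructor
      · intro h
        have := congrFun h 0
        simp at this
      · simp
    · intro α hα
      simp only [mem_filter, mem_univ, true_and] at hα
      have h1 : α 0 = 1 := by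
        have := hα.2
        revert this; generalize α 0 = a; revert a; decide
      rw [← h1]
      exact Fin.cons_self_tail α
    · intro β hβ; exact Fin.tail_cons _ _
    · intro α hα
      simp only [mem_filter, mem_univ, true_and] at hα
      have h1 : α 0 = 1 := by
        have := hα.2
        revert this; generalize α 0 = a; revert a; decide
      rw [Fin.sum_univ_succ, h1]
      simp [Fin.tail]
set_option maxHeartbeats 2000000 in
lemma keydet : ∀ (k : ℕ) (x : Fin k → FF),
    ∏ α ∈ univ.filter (fun α : Fin k → ZMod 2 => α ≠ 0), (∑ i, phi (α i) * x i)
    = (Matrix.of fun i j : Fin k => x j ^ 2 ^ (k - 1 - (i:ℕ))).det := by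
  intro k
  induction k with
  | zero =>
    intro x
    have : univ.filter (fun α : Fin 0 → ZMod 2 => α ≠ 0) = ∅ := by
      apply Finset.filter_false_of_mem
      intro α _
      simp only [ne_eq, not_not]
      funext i; exact i.elim0
    rw [this]
    simp [Matrix.det_fin_zero]
  | succ k ih =>
    intro x
    set L : (Fin k → ZMod 2) → FF := fun β => ∑ i, phi (β i) * x i.succ with hL
    simp only [Nat.add_sub_cancel]
    rw [prod_split]
    by_cases hdep : ∃ β : Fin k → ZMod 2, β ≠ 0 ∧ L β = 0
    · obtain ⟨β, hβ0, hLβ⟩ := hdep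
      have hz : (Matrix.of fun i j : Fin (k+1) => x j ^ 2 ^ (k - (i:ℕ))).det = 0 := by
        refine det_zero_of_comb x (fun i => k - (i:ℕ)) (fun j => phi ((Fin.cons 0 β : Fin (k+1) → ZMod 2) j))
          (fun j => phi_cases _) ?_ ?_
        · intro h
          obtain ⟨j, hj⟩ := Function.ne_iff.mp hβ0
          have hj' : β j ≠ 0 := by simpa using hj
          have hj1 : β j = 1 := by revert hj'; generalize β j = a; revert a; decide
          have := congrFun h j.succ
          simp only [Fin.cons_succ, hj1, Pi.zero_apply, map_one] at this
          exact one_ne_zero this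
        · rw [Fin.sum_univ_succ]
          simp only [Fin.cons_zero, Fin.cons_succ, map_zero, zero_mul, zero_add]
          exact hLβ
      rw [hz]
      rw [Finset.prod_eq_zero (Finset.mem_filter.mpr ⟨mem_univ β, hβ0⟩) hLβ, zero_mul]
    · push_neg at hdep
      have hind : ∀ β : Fin k → ZMod 2, β ≠ 0 → L β ≠ 0 := hdep
      have hLadd : ∀ a b : Fin k → ZMod 2, L (a + b) = L a + L b := by
        intro a b
        simp only [hL, Pi.add_apply, map_add, add_mul, Finset.sum_add_distrib]
      have hLinj : Function.Injective L := by
        intro a b hab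
        by_contra hne
        have h1 : a + b ≠ 0 := by
          intro h
          apply hne
          funext i
          have := congrFun h i
          simp only [Pi.add_apply, Pi.zero_apply] at this
          revert this
          generalize a i = u; generalize b i = v
          revert u v; decide
        have h2 : L (a + b) = 0 := by
          rw [hLadd, hab, ← hLadd]
          have : b + b = 0 := by funext i; simp only [Pi.add_apply, Pi.zero_apply]; generalize b i = u; revert u; decide
          rw [this]
          simp only [hL]
          simp
        exact hind _ h1 h2
      -- the cofactors
      set c : Fin (k+1) → FF := fun i =>
        (Matrix.of fun a b : Fin k => x b.succ ^ 2 ^ (k - ((i.succAbove a : Fin (k+1)) : ℕ))).det with hc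
      -- the polynomial
      set N : Matrix (Fin (k+1)) (Fin (k+1)) (Polynomial FF) := Matrix.of fun i j =>
        if j = 0 then (Polynomial.X : Polynomial FF) ^ 2 ^ (k - (i:ℕ))
        else Polynomial.C (x j ^ 2 ^ (k - (i:ℕ))) with hN
      set f : Polynomial FF := N.det with hf
      have evalf : ∀ s : FF, Polynomial.eval s f =
          (Matrix.of fun i j : Fin (k+1) => (if j = 0 then s else x j) ^ 2 ^ (k - (i:ℕ))).det := by
        intro s
        have : Polynomial.eval s f = (Polynomial.evalRingHom s) N.det := rfl
        rw [this, RingHom.map_det]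
        congr 1
        funext i j
        by_cases hj : j = 0 <;> simp [hN, Matrix.map, hj]
      have hsub : ∀ i : Fin (k+1), (N.submatrix i.succAbove Fin.succ).det = Polynomial.C (c i) := by
        intro i
        have hsm : N.submatrix i.succAbove Fin.succ =
            (Matrix.of fun a b : Fin k => x b.succ ^ 2 ^ (k - ((i.succAbove a : Fin (k+1)) : ℕ))).map
              (Polynomial.C : FF →+* Polynomial FF) := by
          funext a b
          simp [hN, Matrix.submatrix, Matrix.map, Fin.succ_ne_zero]
        rw [hsm]
        exact ((Polynomial.C : FF →+* Polynomial FF).map_det _).symm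
      have hN0 : ∀ i : Fin (k+1), N i 0 = Polynomial.X ^ 2 ^ (k - (i:ℕ)) := by
        intro i; simp [hN]
      have hexp : f = ∑ i : Fin (k+1), Polynomial.X ^ 2 ^ (k - (i:ℕ)) * Polynomial.C (c i) := by
        rw [hf, Matrix.det_succ_column_zero]
        refine Finset.sum_congr rfl fun i _ => ?_
        have hneg : ((-1 : Polynomial FF)) ^ (i : ℕ) = 1 := by
          rw [CharTwo.neg_eq]; exact one_pow _
        rw [hneg, one_mul, hsub i, hN0 i]
      -- the top cofactor is the smaller Moore determinant
      have hc0 : c 0 = ∏ β ∈ univ.filter (fun β : Fin k → ZMod 2 => β ≠ 0), L β := by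
        have e1 : c 0 = (Matrix.of fun a b : Fin k => x b.succ ^ 2 ^ (k - 1 - (a:ℕ))).det := by
          rw [hc]
          simp only []
          congr 1
          funext a b
          simp only [Matrix.of_apply]
          have hv : (((0 : Fin (k+1)).succAbove a : Fin (k+1)) : ℕ) = (a : ℕ) + 1 := by
            rw [Fin.succAbove_zero]
            exact Fin.val_succ a
          rw [hv, show k - ((a:ℕ) + 1) = k - 1 - (a:ℕ) by omega]
        rw [e1, ← ih (fun b => x b.succ)]
      have hcard2 : Fintype.card (Fin k → ZMod 2) = 2 ^ k := by
        rw [Fintype.card_fun]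
        simp
      -- degree bounds for f
      have hdegf : f.natDegree ≤ 2 ^ k := by
        rw [hexp]
        refine Polynomial.natDegree_sum_le_of_forall_le _ _ fun i _ => ?_
        refine le_trans (Polynomial.natDegree_mul_le) ?_
        simp only [Polynomial.natDegree_C, add_zero]
        refine le_trans (Polynomial.natDegree_X_pow_le _) ?_
        exact Nat.pow_le_pow_right (by norm_num) (Nat.sub_le _ _)
      have hcoefff : f.coeff (2 ^ k) = c 0 := by
        rw [hexp, Polynomial.finset_sum_coeff]
        rw [Finset.sum_eq_single (0 : Fin (k+1))]
        · rw [mul_comm, Polynomial.coeff_C_mul, Polynomial.coeff_X_pow]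
          simp
        · intro i _ hi
          rw [mul_comm, Polynomial.coeff_C_mul, Polynomial.coeff_X_pow]
          have h1 : (i : ℕ) ≠ 0 := fun h => hi (Fin.ext h)
          have h2 : (i : ℕ) ≤ k := Fin.is_le i
          have : 2 ^ (k - (i:ℕ)) < 2 ^ k := Nat.pow_lt_pow_right (by norm_num) (by omega)
          rw [if_neg (by omega), mul_zero]
        · intro h; exact absurd (mem_univ _) h
      -- the product polynomial
      set P : Polynomial FF := ∏ β : Fin k → ZMod 2, (Polynomial.X - Polynomial.C (L β)) with hP
      have hPmonic : P.Monic := Polynomial.monic_prod_of_monic _ _ fun β _ => Polynomial.monic_X_sub_C _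
      have hPdeg : P.natDegree = 2 ^ k := by
        rw [hP, Polynomial.natDegree_prod_of_monic _ _ fun β _ => Polynomial.monic_X_sub_C _]
        simp [Polynomial.natDegree_X_sub_C, hcard2]
      set g : Polynomial FF := Polynomial.C (c 0) * P with hg
      have hdegg : g.natDegree ≤ 2 ^ k := by
        refine le_trans (Polynomial.natDegree_mul_le) ?_
        simp [hPdeg]
      have hcoeffg : g.coeff (2 ^ k) = c 0 := by
        rw [hg, Polynomial.coeff_C_mul, ← hPdeg, hPmonic.coeff_natDegree, mul_one]
      -- roots of f
      have hrootf : ∀ β : Fin k → ZMod 2, Polynomial.eval (L β) f = 0 := by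
        intro β
        rw [evalf]
        refine det_zero_of_comb _ (fun i => k - (i:ℕ))
          (fun j => phi ((Fin.cons 1 β : Fin (k+1) → ZMod 2) j)) (fun j => phi_cases _) ?_ ?_
        · intro h
          have := congrFun h 0
          simp only [Fin.cons_zero, map_one, Pi.zero_apply] at this
          exact one_ne_zero this
        · rw [Fin.sum_univ_succ]
          simp only [Fin.cons_zero, Fin.cons_succ, map_one, one_mul, if_pos rfl]
          have : ∀ i : Fin k, phi (β i) * (if i.succ = 0 then L β else x i.succ) = phi (β i) * x i.succ := by
            intro i
            rw [if_neg (Fin.succ_ne_zero i)]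
          rw [Finset.sum_congr rfl fun i _ => this i]
          simp only [if_true]
          show L β + L β = 0
          exact CharTwo.add_self_eq_zero _
      have hrootg : ∀ β : Fin k → ZMod 2, Polynomial.eval (L β) g = 0 := by
        intro β
        rw [hg, Polynomial.eval_mul, hP, Polynomial.eval_prod]
        rw [Finset.prod_eq_zero (mem_univ β) (by simp)]
        rw [mul_zero]
      -- f = g
      have hfg : f = g := by
        have hsubdeg : (f - g).natDegree < 2 ^ k := by
          by_cases h0 : f - g = 0
          · rw [h0]
            simpa using Nat.pos_pow_of_pos k (by norm_num)
          · rw [Polynomial.natDegree_lt_iff_degree_lt h0]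
            rw [Polynomial.degree_lt_iff_coeff_zero]
            intro m hm
            rw [Polynomial.coeff_sub]
            have hm' : 2 ^ k ≤ m := by exact_mod_cast hm
            rcases eq_or_lt_of_le hm' with h | h
            · rw [← h, hcoefff, hcoeffg, sub_self]
            · rw [Polynomial.coeff_eq_zero_of_natDegree_lt (lt_of_le_of_lt hdegf h),
                Polynomial.coeff_eq_zero_of_natDegree_lt (lt_of_le_of_lt hdegg h), sub_self]
        have := Polynomial.eq_zero_of_natDegree_lt_card_of_eval_eq_zero (f - g) hLinj
          (fun β => by rw [Polynomial.eval_sub, hrootf, hrootg, sub_self]) (by rwa [hcard2])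
        exact sub_eq_zero.mp this
      -- conclude
      have hdet : (Matrix.of fun i j : Fin (k+1) => x j ^ 2 ^ (k - (i:ℕ))).det
          = Polynomial.eval (x 0) f := by
        rw [evalf]
        congr 1
        funext i j
        by_cases hj : j = 0 <;> simp [hj]
      rw [hdet, hfg, hg, Polynomial.eval_mul, Polynomial.eval_C, hc0, hP, Polynomial.eval_prod]
      congr 1
      refine Finset.prod_congr rfl fun β _ => ?_
      rw [Polynomial.eval_sub, Polynomial.eval_X, Polynomial.eval_C, CharTwo.sub_eq_add]

end DicksonAux

/-- The product of all nonzero `𝔽₂`-linear forms in `u₁, …, u_k` equals the sum over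
permutations `σ` of `u_{σ(1)}^{2^{k−1}} ⋯ u_{σ(k)}^{2^0}` (Dickson's identity over `𝔽₂`). -/
theorem stmt2 (k : ℕ) :
    (∏ α ∈ Finset.univ.filter (fun α : Fin k → ZMod 2 => α ≠ 0),
        ∑ i : Fin k, (C (α i) * X i : MvPolynomial (Fin k) (ZMod 2))) =
      ∑ σ : Equiv.Perm (Fin k), ∏ i : Fin k, (X (σ i)) ^ (2 ^ (k - 1 - (i : ℕ))) := by
  apply MvPolynomial.map_injective phi phi.injective
  apply MvPolynomial.funext
  intro z
  simp only [map_prod, map_sum, map_mul, map_pow, MvPolynomial.map_C, MvPolynomial.map_X,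
    eval_C, eval_X, eval_prod, eval_sum, eval_mul, eval_pow]
  exact (keydet k z).trans (det_eq_permsum k z)
end

section
/- In the quotient ring 𝔽₂[u₁,u₂]/(u₁^{d+1}, u₂^{d+1}) with d = 3·2^q − 1 (q ≥ 0), the product P = (u₁u₂(u₁+u₂))^{2^{q+1}−1} · u₂ equals u₁^d u₂^d. -/
lemma odd_choose_pow_sub_one (n : ℕ) : ∀ k ≤ 2 ^ n - 1, Nat.choose (2 ^ n - 1) k % 2 = 1 := by
  induction n with
  | zero => intro k hk; interval_cases k; decide
  | succ n ih =>
    intro k hk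
    have hp : Fact (Nat.Prime 2) := ⟨Nat.prime_two⟩
    have h := @Choose.choose_modEq_choose_mod_mul_choose_div_nat (2 ^ (n+1) - 1) k 2 hp
    have h2 : 2 ^ (n+1) = 2 * 2 ^ n := by ring
    have hpos : 1 ≤ 2 ^ n := Nat.one_le_two_pow
    have hmod : (2 ^ (n+1) - 1) % 2 = 1 := by omega
    have hdiv : (2 ^ (n+1) - 1) / 2 = 2 ^ n - 1 := by omega
    have hk2 : k / 2 ≤ 2 ^ n - 1 := by omega
    have := ih (k / 2) hk2
    have hk1 : Nat.choose 1 (k % 2) = 1 := by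
      have : k % 2 = 0 ∨ k % 2 = 1 := by omega
      rcases this with h' | h' <;> simp [h']
    rw [hmod, hdiv, hk1, one_mul] at h
    unfold Nat.ModEq at h
    omega

lemma add_pow_two_pow_sub_one {R : Type*} [CommRing R] (h2 : (2 : R) = 0) (x y : R) (n : ℕ) :
    (x + y) ^ (2 ^ n - 1) =
      ∑ i ∈ Finset.range (2 ^ n), x ^ i * y ^ (2 ^ n - 1 - i) := by
  have hpos : 1 ≤ 2 ^ n := Nat.one_le_two_pow
  have hr : 2 ^ n - 1 + 1 = 2 ^ n := by omega
  rw [add_pow, hr]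
  refine Finset.sum_congr rfl fun i hi => ?_
  have hi' : i ≤ 2 ^ n - 1 := by
    have := Finset.mem_range.mp hi; omega
  have hc := odd_choose_pow_sub_one n i hi'
  set c := Nat.choose (2 ^ n - 1) i with hcdef
  have : c = 2 * (c / 2) + 1 := by omega
  rw [this]
  push_cast
  rw [h2]
  ring

open MvPolynomial

/-- The ideal `(u₁^{d+1}, …, u_k^{d+1})` of the truncated polynomial ring. -/
noncomputable def truncIdeal (k d : ℕ) : Ideal (MvPolynomial (Fin k) (ZMod 2)) :=
  Ideal.span (Set.range fun i : Fin k => (X i : MvPolynomial (Fin k) (ZMod 2)) ^ (d + 1))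

/-- In `𝔽₂[u₁,u₂]/(u₁^{d+1},u₂^{d+1})` with `d = 3·2^q − 1`,
`(u₁u₂(u₁+u₂))^{2^{q+1}−1} · u₂ = u₁^d u₂^d`. -/
theorem stmt4 (q : ℕ) :
    Ideal.Quotient.mk (truncIdeal 2 (3 * 2 ^ q - 1))
        ((X 0 * X 1 * (X 0 + X 1)) ^ (2 ^ (q + 1) - 1) * X 1) =
      Ideal.Quotient.mk (truncIdeal 2 (3 * 2 ^ q - 1))
        (X 0 ^ (3 * 2 ^ q - 1) * X 1 ^ (3 * 2 ^ q - 1)) := by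
  set d : ℕ := 3 * 2 ^ q - 1 with hd
  set f := Ideal.Quotient.mk (truncIdeal 2 d) with hf
  set a := f (X 0) with hab
  set b := f (X 1) with hbb
  have hpos : 1 ≤ 2 ^ q := Nat.one_le_two_pow
  have h2q1 : 2 ^ (q + 1) = 2 * 2 ^ q := by ring
  -- char 2 in the quotient
  have h2P : (2 : MvPolynomial (Fin 2) (ZMod 2)) = 0 := by
    rw [← map_ofNat (C : ZMod 2 →+* MvPolynomial (Fin 2) (ZMod 2)) 2,
      show (2 : ZMod 2) = 0 by decide, map_zero]
  have h2Q : (2 : MvPolynomial (Fin 2) (ZMod 2) ⧸ truncIdeal 2 d) = 0 := by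
    rw [← map_ofNat f 2, h2P, map_zero]
  -- nilpotency of a and b
  have haz : a ^ (d + 1) = 0 := by
    rw [hab, ← map_pow, Ideal.Quotient.eq_zero_iff_mem]
    exact Ideal.subset_span ⟨0, rfl⟩
  have hbz : b ^ (d + 1) = 0 := by
    rw [hbb, ← map_pow, Ideal.Quotient.eq_zero_iff_mem]
    exact Ideal.subset_span ⟨1, rfl⟩
  have ha : ∀ k, d + 1 ≤ k → a ^ k = 0 := fun k hk => by
    rw [← Nat.add_sub_cancel' hk, pow_add, haz, zero_mul]
  have hb : ∀ k, d + 1 ≤ k → b ^ k = 0 := fun k hk => by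
    rw [← Nat.add_sub_cancel' hk, pow_add, hbz, zero_mul]
  simp only [map_mul, map_pow, map_add, ← hab, ← hbb]
  set m : ℕ := 2 ^ (q + 1) - 1 with hm
  rw [mul_pow, mul_pow, add_pow_two_pow_sub_one h2Q, ← hm, Finset.mul_sum, Finset.sum_mul]
  rw [Finset.sum_eq_single (2 ^ q)]
  · have e1 : m + 2 ^ q = d := by omega
    have e2 : m + (m - 2 ^ q) + 1 = d := by omega
    calc a ^ m * b ^ m * (a ^ (2 ^ q) * b ^ (m - 2 ^ q)) * b
        = a ^ (m + 2 ^ q) * b ^ (m + (m - 2 ^ q) + 1) := by ring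
      _ = a ^ d * b ^ d := by rw [e1, e2]
  · intro i hi hne
    have hi' : i < 2 ^ (q + 1) := Finset.mem_range.mp hi
    have hterm : a ^ m * b ^ m * (a ^ i * b ^ (m - i)) * b
        = a ^ (m + i) * b ^ (m + (m - i) + 1) := by ring
    rw [hterm]
    rcases lt_or_gt_of_ne hne with hlt | hgt
    · have : d + 1 ≤ m + (m - i) + 1 := by omega
      rw [hb _ this, mul_zero]
    · have : d + 1 ≤ m + i := by omega
      rw [ha _ this, zero_mul]
  · intro h
    exact absurd (Finset.mem_range.mpr (by omega)) h
end

section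
/- In the quotient ring 𝔽₂[u₁,u₂]/(u₁^{d+1}, u₂^{d+1}) with d = 3·2^{q+2} − 3 (q ≥ 0), the product (u₁u₂(u₁+u₂))^{2^{q+3}−3} · (u₁+u₂) · u₂^{2} equals u₁^d u₂^d. -/
set_option maxHeartbeats 1000000


open MvPolynomial

section CharTwoHelpers

variable {R : Type*} [CommRing R]

lemma two_sq_add (h2 : (2 : R) = 0) (x y : R) : (x + y) ^ 2 = x ^ 2 + y ^ 2 := by
  have h : (x + y) ^ 2 = x ^ 2 + 2 * (x * y) + y ^ 2 := by ring
  rw [h, h2]; ring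

lemma two_sum_sq (h2 : (2 : R) = 0) {ι : Type*} (s : Finset ι) (f : ι → R) :
    (∑ i ∈ s, f i) ^ 2 = ∑ i ∈ s, (f i) ^ 2 := by
  induction s using Finset.cons_induction with
  | empty => simp
  | cons a s ha ih => rw [Finset.sum_cons, Finset.sum_cons, two_sq_add h2, ih]

lemma two_add_pow_pow (h2 : (2 : R) = 0) (x y : R) (n : ℕ) :
    (x + y) ^ (2 ^ n) = x ^ (2 ^ n) + y ^ (2 ^ n) := by
  induction n with
  | zero => simp
  | succ n ih => rw [pow_succ, pow_mul, pow_mul, pow_mul, ih, two_sq_add h2]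

lemma two_geom (h2 : (2 : R) = 0) (x y : R) (n : ℕ) :
    (x + y) ^ (2 ^ n - 1) = ∑ i ∈ Finset.range (2 ^ n), x ^ i * y ^ (2 ^ n - 1 - i) := by
  induction n with
  | zero => simp
  | succ n ih =>
    have h1 : 1 ≤ 2 ^ n := Nat.one_le_two_pow
    have e : 2 ^ (n + 1) - 1 = 2 ^ n + (2 ^ n - 1) := by
      rw [pow_succ]; omega
    have e2 : 2 ^ (n + 1) = 2 ^ n + 2 ^ n := by rw [pow_succ]; omega
    rw [e, pow_add, two_add_pow_pow h2, ih, add_mul, Finset.mul_sum, Finset.mul_sum,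
      e2, Finset.sum_range_add, add_comm]
    congr 1
    · apply Finset.sum_congr rfl
      intro i hi
      rw [Finset.mem_range] at hi
      have h3 : 2 ^ n + (2 ^ n - 1) - i = 2 ^ n + (2 ^ n - 1 - i) := by omega
      rw [h3, pow_add]; ring
    · apply Finset.sum_congr rfl
      intro i hi
      rw [Finset.mem_range] at hi
      have h3 : 2 ^ n + (2 ^ n - 1) - (2 ^ n + i) = 2 ^ n - 1 - i := by omega
      rw [h3, pow_add]; ring

end CharTwoHelpers

/-- In `𝔽₂[u₁,u₂]/(u₁^{d+1},u₂^{d+1})` with `d = 3·2^{q+2} − 3`,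
`(u₁u₂(u₁+u₂))^{2^{q+3}−3} · (u₁+u₂) · u₂² = u₁^d u₂^d`. -/
theorem stmt6 (q : ℕ) :
    Ideal.Quotient.mk (truncIdeal 2 (3 * 2 ^ (q + 2) - 3))
        ((X 0 * X 1 * (X 0 + X 1)) ^ (2 ^ (q + 3) - 3) * (X 0 + X 1) * X 1 ^ 2) =
      Ideal.Quotient.mk (truncIdeal 2 (3 * 2 ^ (q + 2) - 3))
        (X 0 ^ (3 * 2 ^ (q + 2) - 3) * X 1 ^ (3 * 2 ^ (q + 2) - 3)) := by
  set d : ℕ := 3 * 2 ^ (q + 2) - 3 with hd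
  set I : Ideal (MvPolynomial (Fin 2) (ZMod 2)) := truncIdeal 2 d with hI
  set mkI := Ideal.Quotient.mk I with hmk
  set x : MvPolynomial (Fin 2) (ZMod 2) ⧸ I := mkI (X 0) with hx
  set y : MvPolynomial (Fin 2) (ZMod 2) ⧸ I := mkI (X 1) with hy
  -- characteristic 2
  have htwo : (2 : MvPolynomial (Fin 2) (ZMod 2)) = 0 := by
    have : ((2 : ℕ) : MvPolynomial (Fin 2) (ZMod 2)) = 0 :=
      CharP.cast_eq_zero _ 2
    simpa using this
  have h2 : (2 : MvPolynomial (Fin 2) (ZMod 2) ⧸ I) = 0 := by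
    have : ((2 : ℕ) : MvPolynomial (Fin 2) (ZMod 2) ⧸ I) = 0 := by
      rw [← map_natCast mkI]
      simpa [htwo] using congrArg mkI (by push_cast; ring :
        ((2 : ℕ) : MvPolynomial (Fin 2) (ZMod 2)) = 2)
    simpa using this
  -- nilpotence of generators
  have hxz : x ^ (d + 1) = 0 := by
    rw [hx, ← map_pow]
    exact Ideal.Quotient.eq_zero_iff_mem.2 (Ideal.subset_span ⟨0, rfl⟩)
  have hyz : y ^ (d + 1) = 0 := by
    rw [hy, ← map_pow]
    exact Ideal.Quotient.eq_zero_iff_mem.2 (Ideal.subset_span ⟨1, rfl⟩)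
  have hxz' : ∀ a : ℕ, d + 1 ≤ a → x ^ a = 0 := by
    intro a ha
    rw [show a = (d + 1) + (a - (d + 1)) by omega, pow_add, hxz, zero_mul]
  have hyz' : ∀ a : ℕ, d + 1 ≤ a → y ^ a = 0 := by
    intro a ha
    rw [show a = (d + 1) + (a - (d + 1)) by omega, pow_add, hyz, zero_mul]
  -- abbreviations
  set K : ℕ := 2 ^ (q + 1) with hK
  have hK1 : 1 ≤ K := Nat.one_le_two_pow
  have hNq2 : 2 ^ (q + 2) = 2 * K := by rw [hK, pow_succ]; ring
  have hNq3 : 2 ^ (q + 3) = 4 * K := by rw [hK, pow_succ, pow_succ]; ring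
  have hdK : d = 6 * K - 3 := by rw [hd, hNq2]; omega
  -- push the quotient map inside
  show mkI _ = mkI _
  simp only [map_mul, map_pow, map_add, ← hx, ← hy]
  -- now a computation in the quotient ring
  have key : (x + y) ^ (2 ^ (q + 2) - 1)
      = ∑ i ∈ Finset.range (2 ^ (q + 2)), x ^ i * y ^ (2 ^ (q + 2) - 1 - i) :=
    two_geom h2 x y (q + 2)
  have hm : 2 ^ (q + 3) - 3 = 4 * K - 3 := by omega
  have step1 : (x * y * (x + y)) ^ (2 ^ (q + 3) - 3) * (x + y) * y ^ 2
      = x ^ (4 * K - 3) * y ^ (4 * K - 1) * ((x + y) ^ (2 ^ (q + 2) - 1)) ^ 2 := by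
    rw [hm, mul_pow, mul_pow, ← pow_mul]
    have e1 : (2 ^ (q + 2) - 1) * 2 = 4 * K - 2 := by rw [hNq2]; omega
    rw [e1]
    have e2 : (x + y) ^ (4 * K - 3) * (x + y) = (x + y) ^ (4 * K - 2) := by
      rw [← pow_succ]
      congr 1
      omega
    calc x ^ (4 * K - 3) * y ^ (4 * K - 3) * (x + y) ^ (4 * K - 3) * (x + y) * y ^ 2
        = x ^ (4 * K - 3) * (y ^ (4 * K - 3) * y ^ 2) *
            ((x + y) ^ (4 * K - 3) * (x + y)) := by ring
      _ = x ^ (4 * K - 3) * y ^ (4 * K - 1) * (x + y) ^ (4 * K - 2) := by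
          rw [← pow_add, e2, show 4 * K - 3 + 2 = 4 * K - 1 from by omega]
  rw [step1, key, two_sum_sq h2]
  have step2 : x ^ (4 * K - 3) * y ^ (4 * K - 1) *
      ∑ i ∈ Finset.range (2 ^ (q + 2)), (x ^ i * y ^ (2 ^ (q + 2) - 1 - i)) ^ 2
      = ∑ i ∈ Finset.range (2 * K), x ^ (4 * K - 3 + 2 * i) * y ^ (8 * K - 3 - 2 * i) := by
    rw [hNq2, Finset.mul_sum]
    apply Finset.sum_congr rfl
    intro i hi
    rw [Finset.mem_range] at hi
    rw [mul_pow, ← pow_mul, ← pow_mul]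
    have e3 : (2 * K - 1 - i) * 2 = 8 * K - 3 - 2 * i - (4 * K - 1) := by omega
    have e4 : 4 * K - 1 + (8 * K - 3 - 2 * i - (4 * K - 1)) = 8 * K - 3 - 2 * i := by omega
    calc x ^ (4 * K - 3) * y ^ (4 * K - 1) * (x ^ (i * 2) * y ^ ((2 * K - 1 - i) * 2))
        = (x ^ (4 * K - 3) * x ^ (i * 2)) * (y ^ (4 * K - 1) * y ^ ((2 * K - 1 - i) * 2)) := by
          ring
      _ = x ^ (4 * K - 3 + 2 * i) * y ^ (8 * K - 3 - 2 * i) := by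
          rw [← pow_add, ← pow_add, e3, e4]
          congr 2
          omega
  rw [step2]
  have step3 : ∑ i ∈ Finset.range (2 * K), x ^ (4 * K - 3 + 2 * i) * y ^ (8 * K - 3 - 2 * i)
      = x ^ (4 * K - 3 + 2 * K) * y ^ (8 * K - 3 - 2 * K) := by
    apply Finset.sum_eq_single_of_mem K (by rw [Finset.mem_range]; omega)
    intro i hi hne
    rw [Finset.mem_range] at hi
    rcases lt_or_gt_of_ne hne with h | h
    · have : d + 1 ≤ 8 * K - 3 - 2 * i := by omega
      rw [hyz' _ this, mul_zero]
    · have : d + 1 ≤ 4 * K - 3 + 2 * i := by omega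
      rw [hxz' _ this, zero_mul]
  rw [step3]
  congr 2 <;> omega
end

section
/- In the quotient ring 𝔽₂[u₁,u₂,u₃]/(u₁^5, u₂^5, u₃^5) (i.e., d = 4), the product P_{3,1} · P_{3,2}^{1} · P_{3,3}^{2} equals u₁^4 u₂^4 u₃^4, where P_{3,1} = ∑_{σ∈S₃} u_{σ(1)}^4 u_{σ(2)}^2 u_{σ(3)}, P_{3,2} = u₂u₃(u₂+u₃), and P_{3,3} = u₃. -/
open MvPolynomial

lemma perm3_univ : (Finset.univ : Finset (Equiv.Perm (Fin 3))) =
    {Equiv.refl _, Equiv.swap 0 1, Equiv.swap 0 2, Equiv.swap 1 2,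
     Equiv.swap 0 1 * Equiv.swap 1 2, Equiv.swap 1 2 * Equiv.swap 0 1} := by
  decide

lemma pow_mem_trunc (i : Fin 3) :
    (X i : MvPolynomial (Fin 3) (ZMod 2)) ^ 5 ∈ truncIdeal 3 4 :=
  Ideal.subset_span ⟨i, rfl⟩

/-- `P_{3,1} · P_{3,2} · P_{3,3}² = u₁⁴u₂⁴u₃⁴` in `𝔽₂[u₁,u₂,u₃]/(u₁⁵,u₂⁵,u₃⁵)`,
establishing the cascade result `Δ((1,1,2);3) = 4`. -/
theorem stmt7 :
    Ideal.Quotient.mk (truncIdeal 3 4)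
        ((∑ σ : Equiv.Perm (Fin 3), X (σ 0) ^ 4 * X (σ 1) ^ 2 * X (σ 2)) *
          (X 1 * X 2 * (X 1 + X 2)) * (X 2 : MvPolynomial (Fin 3) (ZMod 2)) ^ 2) =
      Ideal.Quotient.mk (truncIdeal 3 4) (X 0 ^ 4 * X 1 ^ 4 * X 2 ^ 4) := by
  rw [Ideal.Quotient.mk_eq_mk_iff_sub_mem]
  have hsum : (∑ σ : Equiv.Perm (Fin 3), X (σ 0) ^ 4 * X (σ 1) ^ 2 * X (σ 2)
      : MvPolynomial (Fin 3) (ZMod 2)) =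
      X 0 ^ 4 * X 1 ^ 2 * X 2 + X 0 ^ 4 * X 2 ^ 2 * X 1 +
      X 1 ^ 4 * X 0 ^ 2 * X 2 + X 1 ^ 4 * X 2 ^ 2 * X 0 +
      X 2 ^ 4 * X 0 ^ 2 * X 1 + X 2 ^ 4 * X 1 ^ 2 * X 0 := by
    rw [perm3_univ]
    rw [Finset.sum_insert (by decide), Finset.sum_insert (by decide),
      Finset.sum_insert (by decide), Finset.sum_insert (by decide),
      Finset.sum_insert (by decide), Finset.sum_singleton]
    norm_num [Equiv.swap_apply_def, Equiv.Perm.mul_apply, Fin.ext_iff]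
    ring
  rw [hsum]
  have key : (X 0 ^ 4 * X 1 ^ 2 * X 2 + X 0 ^ 4 * X 2 ^ 2 * X 1 +
      X 1 ^ 4 * X 0 ^ 2 * X 2 + X 1 ^ 4 * X 2 ^ 2 * X 0 +
      X 2 ^ 4 * X 0 ^ 2 * X 1 + X 2 ^ 4 * X 1 ^ 2 * X 0) *
        (X 1 * X 2 * (X 1 + X 2)) * (X 2 : MvPolynomial (Fin 3) (ZMod 2)) ^ 2 -
      X 0 ^ 4 * X 1 ^ 4 * X 2 ^ 4 =
      (X 0 * X 2 ^ 6 + X 0 * X 1 * X 2 ^ 5 + X 0 ^ 2 * X 2 ^ 5 +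
        X 0 ^ 2 * X 1 * X 2 ^ 4) * X 1 ^ 5 +
      (X 0 * X 1 ^ 3 * X 2 ^ 3 + X 0 * X 1 ^ 4 * X 2 ^ 2 + X 0 ^ 2 * X 1 ^ 2 * X 2 ^ 3 +
        X 0 ^ 2 * X 1 ^ 3 * X 2 ^ 2 + X 0 ^ 4 * X 1 ^ 2 * X 2) * X 2 ^ 5 := by
    have h2 : (2 : MvPolynomial (Fin 3) (ZMod 2)) = 0 := by
      have := CharP.cast_eq_zero (MvPolynomial (Fin 3) (ZMod 2)) 2
      exact_mod_cast this
    linear_combination (X 0 ^ 4 * X 1 ^ 3 * X 2 ^ 5 :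
      MvPolynomial (Fin 3) (ZMod 2)) * h2
  rw [key]
  exact Ideal.add_mem _ (Ideal.mul_mem_left _ _ (pow_mem_trunc 1))
    (Ideal.mul_mem_left _ _ (pow_mem_trunc 2))
end

section
/- In 𝔽₂[u₁,…,u_k]/(u₁^{d+1},…,u_k^{d+1}) with k ≥ 2, q ≥ 1, m = 2^{q+1} − 1, and d = U(m;k) = 2^{q+k−1} + 2^q − 1, the product Q = [∑_{σ∈S_k} u_{σ(1)}^{2^{k−1}}⋯u_{σ(k)}^{1}]^{2^q} · [∑_{τ∈S_k} u_{τ(1)}^{2^{k−1}}⋯u_{τ(k)}^{1}]^{2^q−1} · [∑_{ψ∈S_k} u_{ψ(1)}^{k−1}⋯u_{ψ(k)}^{0}] vanishes (equals 0), i.e., this polynomial method fails to prove Δ^⟂(2^{q+1}−1; k) ≤ U(2^{q+1}−1; k). -/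
open MvPolynomial

namespace Stmt19Aux

open Finset Equiv

/-! ### Arithmetic helpers -/

lemma sum_range_two_pow (n : ℕ) : ∑ j ∈ Finset.range n, 2 ^ j = 2 ^ n - 1 := by
  induction n with
  | zero => simp
  | succ n ih =>
    rw [Finset.sum_range_succ, ih]
    have : 1 ≤ 2 ^ n := Nat.one_le_two_pow
    omega

lemma sum_fin_two_pow (n c : ℕ) : (∑ j : Fin n, 2 ^ ((j : ℕ) + c)) + 2 ^ c = 2 ^ (n + c) := by
  induction n with
  | zero => simp
  | succ n ih =>
    rw [Fin.sum_univ_castSucc]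
    simp only [Fin.coe_castSucc, Fin.val_last]
    have h3 : 2 ^ (n + 1 + c) = 2 ^ (n + c) + 2 ^ (n + c) := by
      rw [show n + 1 + c = (n + c) + 1 by omega, pow_succ]; omega
    omega

lemma forced0 {n : ℕ} (t : Fin n → ℕ) (g : ℕ)
    (h : (∑ j : Fin n, 2 ^ ((j : ℕ) + t j)) + g ≤ 2 ^ n - 1) :
    (∀ j, t j = 0) ∧ g = 0 := by
  have base : ∑ j : Fin n, 2 ^ ((j : ℕ) + 0) = 2 ^ n - 1 := by
    have h := sum_fin_two_pow n 0
    rw [pow_zero, Nat.add_zero] at h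
    omega
  have hge : 2 ^ n - 1 ≤ ∑ j : Fin n, 2 ^ ((j : ℕ) + t j) := by
    rw [← base]
    exact Finset.sum_le_sum fun j _ => Nat.pow_le_pow_right (by norm_num) (by omega)
  refine ⟨fun j0 => ?_, by omega⟩
  by_contra h0
  have hlt : (∑ j : Fin n, 2 ^ ((j : ℕ) + 0)) < ∑ j : Fin n, 2 ^ ((j : ℕ) + t j) :=
    Finset.sum_lt_sum (fun j _ => Nat.pow_le_pow_right (by norm_num) (by omega))
      ⟨j0, Finset.mem_univ _, Nat.pow_lt_pow_right (by norm_num) (by omega)⟩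
  rw [base] at hlt
  omega

lemma forced1 {n : ℕ} (t : Fin n → ℕ) (g : ℕ) (ht : ∀ j, 1 ≤ t j) (hg : 1 ≤ g)
    (h : (∑ j : Fin n, 2 ^ ((j : ℕ) + t j)) + g ≤ 2 ^ (n + 1) - 1) :
    (∀ j, t j = 1) ∧ g = 1 := by
  have base : ∑ j : Fin n, 2 ^ ((j : ℕ) + 1) = 2 ^ (n + 1) - 2 := by
    have h := sum_fin_two_pow n 1
    rw [pow_one] at h
    omega
  have hge : 2 ^ (n + 1) - 2 ≤ ∑ j : Fin n, 2 ^ ((j : ℕ) + t j) := by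
    rw [← base]
    exact Finset.sum_le_sum fun j _ =>
      Nat.pow_le_pow_right (by norm_num) (by have := ht j; omega)
  have h2 : (2 : ℕ) ≤ 2 ^ (n + 1) := by
    have : (2 : ℕ) ^ 1 ≤ 2 ^ (n + 1) := Nat.pow_le_pow_right (by norm_num) (by omega)
    simpa using this
  refine ⟨fun j0 => ?_, by omega⟩
  by_contra h0
  have hlt : (∑ j : Fin n, 2 ^ ((j : ℕ) + 1)) < ∑ j : Fin n, 2 ^ ((j : ℕ) + t j) :=
    Finset.sum_lt_sum
      (fun j _ => Nat.pow_le_pow_right (by norm_num) (by have := ht j; omega))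
      ⟨j0, Finset.mem_univ _,
        Nat.pow_lt_pow_right (by norm_num) (by have := ht j0; omega)⟩
  rw [base] at hlt
  omega

/-! ### The rotation permutation -/

variable {K Q : ℕ}

def rot (K : ℕ) : Equiv.Perm (Fin (K + 2)) := finRotate (K + 2)

lemma rot_val_of_ne (s : Fin (K + 2)) (h : (s : ℕ) ≠ K + 1) :
    ((rot K s : Fin (K + 2)) : ℕ) = (s : ℕ) + 1 := by
  have hne : s ≠ Fin.last (K + 1) := by
    intro hs; exact h (by rw [hs]; rfl)
  simpa [rot] using coe_finRotate_of_ne_last hne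

lemma rot_val_last : ((rot K (Fin.last (K + 1)) : Fin (K + 2)) : ℕ) = 0 := by
  simp [rot, finRotate_last]

lemma rot_symm_val_of_ne (s : Fin (K + 2)) (h : (s : ℕ) ≠ 0) :
    (((rot K).symm s : Fin (K + 2)) : ℕ) = (s : ℕ) - 1 := by
  have hlt : (s : ℕ) < K + 2 := s.isLt
  have hts : rot K ⟨(s : ℕ) - 1, by omega⟩ = s := by
    apply Fin.ext
    rw [rot_val_of_ne ⟨(s : ℕ) - 1, by omega⟩ (by simp; omega)]
    simp; omega
  have h2 : (rot K).symm s = ⟨(s : ℕ) - 1, by omega⟩ := by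
    rw [Equiv.symm_apply_eq]
    exact hts.symm
  rw [h2]

lemma rot_symm_val_zero (s : Fin (K + 2)) (h : (s : ℕ) = 0) :
    (((rot K).symm s : Fin (K + 2)) : ℕ) = K + 1 := by
  have hs : s = rot K (Fin.last (K + 1)) := by
    apply Fin.ext; rw [rot_val_last, h]
  rw [hs, Equiv.symm_apply_apply]; rfl

/-! ### The index set and its combinatorics -/

abbrev Gam (K Q : ℕ) := (Fin (Q + 2) → Equiv.Perm (Fin (K + 2))) × Equiv.Perm (Fin (K + 2))

def jtop (Q : ℕ) : Fin (Q + 2) := Fin.last (Q + 1)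
def jsec (Q : ℕ) : Fin (Q + 2) := (Fin.last Q).castSucc

lemma jsec_ne_jtop : jsec Q ≠ jtop Q := by
  simp [jsec, jtop, Fin.ext_iff]

def Efun (γ : Gam K Q) (v : Fin (K + 2)) : ℕ :=
  (∑ j : Fin (Q + 2), 2 ^ ((j : ℕ) + (K + 1 - ((γ.1 j).symm v : ℕ)))) +
    (K + 1 - ((γ.2).symm v : ℕ))

def dd (K Q : ℕ) : ℕ := 2 ^ (Q + K + 2) + 2 ^ (Q + 1) - 1

noncomputable def Term (γ : Gam K Q) : MvPolynomial (Fin (K + 2)) (ZMod 2) :=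
  ∏ v, X v ^ Efun γ v

def vstar (γ : Gam K Q) : Fin (K + 2) := γ.1 (jtop Q) 0
def bvar (γ : Gam K Q) : Fin (K + 2) := γ.1 (jtop Q) 1
def swp (γ : Gam K Q) : Equiv.Perm (Fin (K + 2)) := Equiv.swap (vstar γ) (bvar γ)
def Fcond (γ : Gam K Q) : Prop := γ.1 (jtop Q) = (rot K).symm.trans (γ.1 (jsec Q))

noncomputable def inv1 (γ : Gam K Q) : Gam K Q :=
  (Function.update (Function.update γ.1 (jsec Q) ((rot K).trans (γ.1 (jtop Q)))) (jtop Q)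
      ((rot K).symm.trans (γ.1 (jsec Q))), γ.2)

noncomputable def inv2 (γ : Gam K Q) : Gam K Q :=
  (fun j => (γ.1 j).trans (swp γ), γ.2.trans (swp γ))

open scoped Classical in
noncomputable def invol (γ : Gam K Q) : Gam K Q := if Fcond γ then inv2 γ else inv1 γ

lemma invol_eq_inv2 {γ : Gam K Q} (hF : Fcond γ) : invol γ = inv2 γ := by
  unfold invol; exact if_pos hF

lemma invol_eq_inv1 {γ : Gam K Q} (hF : ¬Fcond γ) : invol γ = inv1 γ := by
  unfold invol; exact if_neg hF

lemma inv1_fst_jtop (γ : Gam K Q) :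
    (inv1 γ).1 (jtop Q) = (rot K).symm.trans (γ.1 (jsec Q)) := by
  simp [inv1]

lemma inv1_fst_jsec (γ : Gam K Q) :
    (inv1 γ).1 (jsec Q) = (rot K).trans (γ.1 (jtop Q)) := by
  simp [inv1, Function.update_of_ne jsec_ne_jtop]

lemma castSucc2_ne_jtop (j : Fin Q) : (j.castSucc.castSucc : Fin (Q + 2)) ≠ jtop Q := by
  simp [jtop, Fin.ext_iff]
  omega

lemma castSucc2_ne_jsec (j : Fin Q) : (j.castSucc.castSucc : Fin (Q + 2)) ≠ jsec Q := by
  simp [jsec, Fin.ext_iff]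
  omega

lemma inv1_fst_lower (γ : Gam K Q) (j : Fin Q) :
    (inv1 γ).1 j.castSucc.castSucc = γ.1 j.castSucc.castSucc := by
  simp [inv1, Function.update_of_ne (castSucc2_ne_jtop j),
    Function.update_of_ne (castSucc2_ne_jsec j)]

/-- Splitting the layer sum at the two top layers. -/
lemma Efun_split (γ : Gam K Q) (v : Fin (K + 2)) :
    Efun γ v =
      (∑ j : Fin Q, 2 ^ ((j : ℕ) + (K + 1 - ((γ.1 j.castSucc.castSucc).symm v : ℕ)))) +
        2 ^ (Q + (K + 1 - ((γ.1 (jsec Q)).symm v : ℕ))) +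
        2 ^ (Q + 1 + (K + 1 - ((γ.1 (jtop Q)).symm v : ℕ))) +
        (K + 1 - ((γ.2).symm v : ℕ)) := by
  rw [Efun, Fin.sum_univ_castSucc, Fin.sum_univ_castSucc]
  simp only [Fin.coe_castSucc, Fin.val_last, jsec, jtop]

/-- Splitting off only the top layer. -/
lemma Efun_split1 (γ : Gam K Q) (v : Fin (K + 2)) :
    Efun γ v =
      (∑ j : Fin (Q + 1), 2 ^ ((j : ℕ) + (K + 1 - ((γ.1 j.castSucc).symm v : ℕ)))) +
        2 ^ (Q + 1 + (K + 1 - ((γ.1 (jtop Q)).symm v : ℕ))) +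
        (K + 1 - ((γ.2).symm v : ℕ)) := by
  rw [Efun, Fin.sum_univ_castSucc]
  simp only [Fin.coe_castSucc, Fin.val_last, jtop]

lemma one_le_two_pow' (n : ℕ) : 1 ≤ 2 ^ n := Nat.one_le_two_pow

/-- Forced structure at the top variable `vstar`. -/
lemma forcedA {γ : Gam K Q} (hs : ∀ v, Efun γ v ≤ dd K Q) :
    (∀ j : Fin (Q + 2), j ≠ jtop Q → ((γ.1 j).symm (vstar γ) : ℕ) = K + 1) ∧
      ((γ.2.symm (vstar γ) : ℕ) = K + 1) ∧ Efun γ (vstar γ) = dd K Q := by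
  have htopslot : ((γ.1 (jtop Q)).symm (vstar γ) : ℕ) = 0 := by
    simp [vstar]
  have hb := hs (vstar γ)
  rw [Efun_split1, htopslot] at hb
  rw [show Q + 1 + (K + 1 - 0) = Q + K + 2 by omega] at hb
  have hdd : dd K Q = 2 ^ (Q + K + 2) + 2 ^ (Q + 1) - 1 := rfl
  rw [hdd] at hb
  have hbb : (∑ j : Fin (Q + 1),
        2 ^ ((j : ℕ) + (K + 1 - ((γ.1 j.castSucc).symm (vstar γ) : ℕ)))) +
      (K + 1 - ((γ.2).symm (vstar γ) : ℕ)) ≤ 2 ^ (Q + 1) - 1 := by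
    have h1 := one_le_two_pow' (Q + K + 2)
    omega
  obtain ⟨h0, hg0⟩ := forced0 _ _ hbb
  have hslots : ∀ j : Fin (Q + 2), j ≠ jtop Q → ((γ.1 j).symm (vstar γ) : ℕ) = K + 1 := by
    intro j hj
    obtain ⟨j', rfl⟩ := Fin.exists_castSucc_eq.mpr hj
    have := h0 j'
    have hle : ((γ.1 j'.castSucc).symm (vstar γ) : ℕ) ≤ K + 1 := Fin.is_le _
    omega
  have hpsi : (γ.2.symm (vstar γ) : ℕ) = K + 1 := by
    have hle : (γ.2.symm (vstar γ) : ℕ) ≤ K + 1 := Fin.is_le _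
    omega
  refine ⟨hslots, hpsi, ?_⟩
  rw [Efun_split1, htopslot, hpsi]
  rw [show Q + 1 + (K + 1 - 0) = Q + K + 2 by omega]
  have hsumeq : (∑ j : Fin (Q + 1),
      2 ^ ((j : ℕ) + (K + 1 - ((γ.1 j.castSucc).symm (vstar γ) : ℕ)))) + 1 = 2 ^ (Q + 1) := by
    rw [Finset.sum_congr rfl fun (j : Fin (Q + 1)) _ => by rw [h0 j]]
    have h := sum_fin_two_pow (Q + 1) 0
    rw [pow_zero] at h
    exact h
  have hdd2 : dd K Q = 2 ^ (Q + K + 2) + 2 ^ (Q + 1) - 1 := rfl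
  obtain ⟨A, hA⟩ : ∃ A, 2 ^ (Q + K + 2) = A := ⟨_, rfl⟩
  obtain ⟨B, hB⟩ : ∃ B, 2 ^ (Q + 1) = B := ⟨_, rfl⟩
  rw [hB] at hsumeq
  rw [hA, hB] at hdd2
  rw [hA]
  omega

/-- Forced structure at the second variable `bvar` when `Fcond` holds. -/
lemma forcedB {γ : Gam K Q} (hs : ∀ v, Efun γ v ≤ dd K Q) (hF : Fcond γ) :
    Efun γ (bvar γ) = dd K Q := by
  obtain ⟨hA, hApsi, _⟩ := forcedA hs
  have hvb : bvar γ ≠ vstar γ := by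
    intro h
    have h01 := (γ.1 (jtop Q)).injective (h : γ.1 (jtop Q) 1 = γ.1 (jtop Q) 0)
    exact absurd h01 (by simp [Fin.ext_iff])
  have hbtop : ((γ.1 (jtop Q)).symm (bvar γ) : ℕ) = 1 := by
    simp [bvar]
  have hsec_eq : γ.1 (jsec Q) = (rot K).trans (γ.1 (jtop Q)) := by
    rw [hF]; ext x; simp
  have hbsec : ((γ.1 (jsec Q)).symm (bvar γ) : ℕ) = 0 := by
    rw [hsec_eq]
    have : ((rot K).trans (γ.1 (jtop Q))).symm (bvar γ) =
        (rot K).symm ((γ.1 (jtop Q)).symm (bvar γ)) := by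
      simp [Equiv.symm_trans_apply]
    rw [this]
    rw [rot_symm_val_of_ne _ (by rw [hbtop]; omega), hbtop]
  have hslot : ∀ j : Fin Q, 1 ≤ K + 1 - ((γ.1 j.castSucc.castSucc).symm (bvar γ) : ℕ) := by
    intro j
    have hvK : ((γ.1 j.castSucc.castSucc).symm (vstar γ) : ℕ) = K + 1 :=
      hA _ (castSucc2_ne_jtop j)
    have hne : ((γ.1 j.castSucc.castSucc).symm (bvar γ) : ℕ) ≠ K + 1 := by
      intro h
      apply hvb
      have : (γ.1 j.castSucc.castSucc).symm (bvar γ) =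
          (γ.1 j.castSucc.castSucc).symm (vstar γ) := Fin.ext (by rw [h, hvK])
      exact (γ.1 j.castSucc.castSucc).symm.injective this
    have hle : ((γ.1 j.castSucc.castSucc).symm (bvar γ) : ℕ) ≤ K + 1 := Fin.is_le _
    omega
  have hpsi1 : 1 ≤ K + 1 - ((γ.2).symm (bvar γ) : ℕ) := by
    have hne : ((γ.2).symm (bvar γ) : ℕ) ≠ K + 1 := by
      intro h
      apply hvb
      have : (γ.2).symm (bvar γ) = (γ.2).symm (vstar γ) := Fin.ext (by rw [h, hApsi])
      exact (γ.2).symm.injective this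
    have hle : ((γ.2).symm (bvar γ) : ℕ) ≤ K + 1 := Fin.is_le _
    omega
  have hb := hs (bvar γ)
  rw [Efun_split, hbtop, hbsec] at hb
  rw [show Q + (K + 1 - 0) = Q + K + 1 by omega,
    show Q + 1 + (K + 1 - 1) = Q + K + 1 by omega] at hb
  have hdd : dd K Q = 2 ^ (Q + K + 2) + 2 ^ (Q + 1) - 1 := rfl
  rw [hdd] at hb
  have hPP : 2 ^ (Q + K + 2) = 2 ^ (Q + K + 1) + 2 ^ (Q + K + 1) := by
    rw [show Q + K + 2 = (Q + K + 1) + 1 by omega, pow_succ]; omega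
  have hbb : (∑ j : Fin Q,
        2 ^ ((j : ℕ) + (K + 1 - ((γ.1 j.castSucc.castSucc).symm (bvar γ) : ℕ)))) +
      (K + 1 - ((γ.2).symm (bvar γ) : ℕ)) ≤ 2 ^ (Q + 1) - 1 := by
    have h1 := one_le_two_pow' (Q + K + 1)
    omega
  obtain ⟨h1, hg1⟩ := forced1 _ _ hslot hpsi1 hbb
  rw [Efun_split, hbtop, hbsec, hg1]
  rw [show Q + (K + 1 - 0) = Q + K + 1 by omega,
    show Q + 1 + (K + 1 - 1) = Q + K + 1 by omega]
  have hsumeq : (∑ j : Fin Q,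
      2 ^ ((j : ℕ) + (K + 1 - ((γ.1 j.castSucc.castSucc).symm (bvar γ) : ℕ)))) + 2 =
      2 ^ (Q + 1) := by
    rw [Finset.sum_congr rfl fun (j : Fin Q) _ => by rw [h1 j]]
    have h := sum_fin_two_pow Q 1
    rw [pow_one] at h
    exact h
  have hdd3 : dd K Q = 2 ^ (Q + K + 2) + 2 ^ (Q + 1) - 1 := rfl
  obtain ⟨A, hA⟩ : ∃ A, 2 ^ (Q + K + 1) = A := ⟨_, rfl⟩
  obtain ⟨B, hB⟩ : ∃ B, 2 ^ (Q + 1) = B := ⟨_, rfl⟩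
  obtain ⟨C, hC⟩ : ∃ C, 2 ^ (Q + K + 2) = C := ⟨_, rfl⟩
  have hCA : C = A + A := by
    rw [← hA, ← hC, show Q + K + 2 = (Q + K + 1) + 1 by omega, pow_succ]; omega
  rw [hB] at hsumeq
  rw [hC, hB] at hdd3
  rw [hA]
  omega

/-- `inv1` preserves the exponents of the monomial. -/
lemma Epres1 {γ : Gam K Q} (hs : ∀ v, Efun γ v ≤ dd K Q) (v : Fin (K + 2)) :
    Efun (inv1 γ) v = Efun γ v := by
  have hA : ((γ.1 (jsec Q)).symm (vstar γ) : ℕ) = K + 1 :=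
    (forcedA hs).1 _ jsec_ne_jtop
  rw [Efun_split, Efun_split]
  rw [inv1_fst_jtop, inv1_fst_jsec]
  simp only [inv1_fst_lower]
  have hψ : (inv1 γ).2 = γ.2 := rfl
  rw [hψ]
  congr 1
  have hsymm1 : (((rot K).trans (γ.1 (jtop Q))).symm v : ℕ) =
      (((rot K).symm ((γ.1 (jtop Q)).symm v)) : ℕ) := by
    simp [Equiv.symm_trans_apply]
  have hsymm2 : ((((rot K).symm.trans (γ.1 (jsec Q)))).symm v : ℕ) =
      ((rot K ((γ.1 (jsec Q)).symm v)) : ℕ) := by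
    simp [Equiv.symm_trans_apply]
  rw [hsymm1, hsymm2]
  by_cases hv : v = vstar γ
  · subst hv
    have h1 : ((γ.1 (jtop Q)).symm (vstar γ) : ℕ) = 0 := by simp [vstar]
    have h2 : (((rot K).symm ((γ.1 (jtop Q)).symm (vstar γ))) : ℕ) = K + 1 :=
      rot_symm_val_zero _ h1
    have h3 : ((rot K ((γ.1 (jsec Q)).symm (vstar γ))) : ℕ) = 0 := by
      have : (γ.1 (jsec Q)).symm (vstar γ) = Fin.last (K + 1) := Fin.ext (by rw [hA]; rfl)
      rw [this, rot_val_last]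
    rw [h1, h2, h3, hA]
  · have hs2 : ((γ.1 (jtop Q)).symm v : ℕ) ≠ 0 := by
      intro h
      apply hv
      have : (γ.1 (jtop Q)).symm v = 0 := Fin.ext (by rw [h]; rfl)
      have := congrArg (γ.1 (jtop Q)) this
      simpa [vstar] using this
    have hs1 : ((γ.1 (jsec Q)).symm v : ℕ) ≠ K + 1 := by
      intro h
      apply hv
      have : (γ.1 (jsec Q)).symm v = (γ.1 (jsec Q)).symm (vstar γ) := Fin.ext (by rw [h, hA])
      exact (γ.1 (jsec Q)).symm.injective this
    rw [rot_symm_val_of_ne _ hs2, rot_val_of_ne _ hs1]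
    set s2 := ((γ.1 (jtop Q)).symm v : ℕ) with hs2def
    set s1 := ((γ.1 (jsec Q)).symm v : ℕ) with hs1def
    have hle2 : s2 ≤ K + 1 := Fin.is_le _
    have hle1 : s1 ≤ K + 1 := Fin.is_le _
    rw [show Q + (K + 1 - (s2 - 1)) = Q + 1 + (K + 1 - s2) by omega,
      show Q + 1 + (K + 1 - (s1 + 1)) = Q + (K + 1 - s1) by omega]
    try omega
    try ring

/-- `inv2` preserves the exponents of the monomial. -/
lemma Epres2 {γ : Gam K Q} (hs : ∀ v, Efun γ v ≤ dd K Q) (hF : Fcond γ) (v : Fin (K + 2)) :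
    Efun (inv2 γ) v = Efun γ v := by
  have hswap : Efun (inv2 γ) v = Efun γ (swp γ v) := by
    have hsy : (swp γ).symm = swp γ := by rw [swp]; exact Equiv.symm_swap _ _
    simp only [Efun, inv2, Equiv.symm_trans_apply, hsy]
  rw [hswap]
  rcases eq_or_ne v (vstar γ) with rfl | hv1
  · rw [swp, Equiv.swap_apply_left, forcedB hs hF, (forcedA hs).2.2]
  rcases eq_or_ne v (bvar γ) with rfl | hv2
  · rw [swp, Equiv.swap_apply_right, (forcedA hs).2.2, forcedB hs hF]
  · rw [swp, Equiv.swap_apply_of_ne_of_ne hv1 hv2]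

/-! ### Involution properties -/

lemma inv1_inv1 (γ : Gam K Q) : inv1 (inv1 γ) = γ := by
  refine Prod.ext ?_ rfl
  funext j
  rcases eq_or_ne j (jtop Q) with rfl | hj1
  · rw [inv1_fst_jtop, inv1_fst_jsec]
    ext x; simp
  rcases eq_or_ne j (jsec Q) with rfl | hj2
  · rw [inv1_fst_jsec, inv1_fst_jtop]
    ext x; simp
  · show Function.update (Function.update (inv1 γ).1 (jsec Q) _) (jtop Q) _ j = γ.1 j
    rw [Function.update_of_ne hj1, Function.update_of_ne hj2]
    show Function.update (Function.update γ.1 (jsec Q) _) (jtop Q) _ j = γ.1 j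
    rw [Function.update_of_ne hj1, Function.update_of_ne hj2]

lemma Fcond_inv1 (γ : Gam K Q) : Fcond (inv1 γ) ↔ Fcond γ := by
  unfold Fcond
  rw [inv1_fst_jtop, inv1_fst_jsec]
  constructor
  · intro h
    have := congrArg (fun e => (rot K).trans e) h
    have h2 : γ.1 (jsec Q) = (rot K).trans ((rot K).symm.trans ((rot K).trans (γ.1 (jtop Q)))) := by
      rw [← this]; ext x; simp
    rw [h2]; ext x; simp
  · intro h
    rw [h]; ext x; simp

lemma vstar_inv2 (γ : Gam K Q) : vstar (inv2 γ) = bvar γ := by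
  show ((γ.1 (jtop Q)).trans (swp γ)) 0 = bvar γ
  simp [swp, vstar, bvar]

lemma bvar_inv2 (γ : Gam K Q) : bvar (inv2 γ) = vstar γ := by
  show ((γ.1 (jtop Q)).trans (swp γ)) 1 = vstar γ
  simp [swp, vstar, bvar]

lemma swp_inv2 (γ : Gam K Q) : swp (inv2 γ) = swp γ := by
  rw [swp, vstar_inv2, bvar_inv2, Equiv.swap_comm]
  rfl

lemma inv2_inv2 (γ : Gam K Q) : inv2 (inv2 γ) = γ := by
  refine Prod.ext ?_ ?_
  · funext j
    show ((γ.1 j).trans (swp γ)).trans (swp (inv2 γ)) = γ.1 j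
    rw [swp_inv2, Equiv.trans_assoc, swp, Equiv.swap_swap, Equiv.trans_refl]
  · show (γ.2.trans (swp γ)).trans (swp (inv2 γ)) = γ.2
    rw [swp_inv2, Equiv.trans_assoc, swp, Equiv.swap_swap, Equiv.trans_refl]

lemma Fcond_inv2 {γ : Gam K Q} (hF : Fcond γ) : Fcond (inv2 γ) := by
  show (γ.1 (jtop Q)).trans (swp γ) = (rot K).symm.trans ((γ.1 (jsec Q)).trans (swp γ))
  rw [hF, Equiv.trans_assoc]

lemma inv2_ne (γ : Gam K Q) : inv2 γ ≠ γ := by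
  intro h
  have h1 : (inv2 γ).1 (jtop Q) 0 = γ.1 (jtop Q) 0 := by rw [h]
  have h2 : bvar γ = vstar γ := by
    have : ((γ.1 (jtop Q)).trans (swp γ)) 0 = vstar γ := h1
    simpa [swp, vstar, bvar] using this
  have h01 := (γ.1 (jtop Q)).injective (h2 : γ.1 (jtop Q) 1 = γ.1 (jtop Q) 0)
  exact absurd h01 (by simp [Fin.ext_iff])

lemma inv1_ne {γ : Gam K Q} (h : ¬Fcond γ) : inv1 γ ≠ γ := by
  intro he
  apply h
  have h1 : (inv1 γ).1 (jtop Q) = γ.1 (jtop Q) := by rw [he]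
  rw [inv1_fst_jtop] at h1
  exact h1.symm

/-! ### Algebraic expansion -/

lemma perm_prod {n : ℕ} (σ : Equiv.Perm (Fin n)) (f : Fin n → ℕ) :
    ∏ i, (X (σ i) : MvPolynomial (Fin n) (ZMod 2)) ^ f i = ∏ v, (X v) ^ f (σ.symm v) := by
  rw [← Equiv.prod_comp σ (fun v => (X v : MvPolynomial (Fin n) (ZMod 2)) ^ f (σ.symm v))]
  refine Finset.prod_congr rfl fun i _ => ?_
  rw [Equiv.symm_apply_apply]

lemma S_pow_two_pow (m : ℕ) :
    (∑ σ : Equiv.Perm (Fin (K + 2)), ∏ i : Fin (K + 2),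
        (X (σ i) : MvPolynomial (Fin (K + 2)) (ZMod 2)) ^ 2 ^ (K + 1 - (i : ℕ))) ^ 2 ^ m =
      ∑ σ : Equiv.Perm (Fin (K + 2)), ∏ i : Fin (K + 2),
        (X (σ i) : MvPolynomial (Fin (K + 2)) (ZMod 2)) ^ 2 ^ (m + (K + 1 - (i : ℕ))) := by
  induction m with
  | zero => simp
  | succ m ih =>
    rw [show (2 : ℕ) ^ (m + 1) = 2 ^ m * 2 by rw [pow_succ], pow_mul, ih]
    rw [sum_pow_char]
    refine Finset.sum_congr rfl fun σ _ => ?_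
    rw [← Finset.prod_pow]
    refine Finset.prod_congr rfl fun i _ => ?_
    rw [← pow_mul]
    congr 1
    rw [← pow_succ]
    congr 1
    omega

lemma expansion :
    (∑ σ : Equiv.Perm (Fin (K + 2)), ∏ i : Fin (K + 2),
        (X (σ i) : MvPolynomial (Fin (K + 2)) (ZMod 2)) ^ 2 ^ (K + 1 - (i : ℕ))) ^ 2 ^ (Q + 1) *
      (∑ σ : Equiv.Perm (Fin (K + 2)), ∏ i : Fin (K + 2),
        (X (σ i) : MvPolynomial (Fin (K + 2)) (ZMod 2)) ^ 2 ^ (K + 1 - (i : ℕ))) ^ (2 ^ (Q + 1) - 1) *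
      (∑ ψ : Equiv.Perm (Fin (K + 2)), ∏ i : Fin (K + 2),
        (X (ψ i) : MvPolynomial (Fin (K + 2)) (ZMod 2)) ^ (K + 1 - (i : ℕ))) =
    ∑ γ : Gam K Q, Term γ := by
  classical
  set S : MvPolynomial (Fin (K + 2)) (ZMod 2) :=
    ∑ σ : Equiv.Perm (Fin (K + 2)), ∏ i : Fin (K + 2),
      (X (σ i) : MvPolynomial (Fin (K + 2)) (ZMod 2)) ^ 2 ^ (K + 1 - (i : ℕ)) with hS
  have hfac : S ^ 2 ^ (Q + 1) * S ^ (2 ^ (Q + 1) - 1) = ∏ j : Fin (Q + 2), S ^ 2 ^ (j : ℕ) := by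
    rw [← pow_add, Fin.prod_univ_eq_prod_range (fun j => S ^ 2 ^ j) (Q + 2),
      Finset.prod_pow_eq_pow_sum, sum_range_two_pow]
    congr 1
    have h1 := one_le_two_pow' (Q + 1)
    have h2 : 2 ^ (Q + 2) = 2 ^ (Q + 1) + 2 ^ (Q + 1) := by
      rw [pow_succ]; omega
    omega
  rw [hfac]
  have hSj : ∀ j : Fin (Q + 2), S ^ 2 ^ (j : ℕ) =
      ∑ σ : Equiv.Perm (Fin (K + 2)), ∏ i : Fin (K + 2),
        (X (σ i) : MvPolynomial (Fin (K + 2)) (ZMod 2)) ^ 2 ^ ((j : ℕ) + (K + 1 - (i : ℕ))) :=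
    fun j => S_pow_two_pow (j : ℕ)
  rw [Finset.prod_congr rfl fun j _ => hSj j]
  rw [Finset.prod_univ_sum]
  rw [Fintype.piFinset_univ]
  rw [Finset.sum_mul_sum]
  rw [← Fintype.sum_prod_type']
  refine Finset.sum_congr rfl fun γ hγ => ?_
  obtain ⟨g, ψ⟩ := γ
  rw [Term]
  have hU : ∀ j : Fin (Q + 2), (∏ i : Fin (K + 2),
      (X ((g j) i) : MvPolynomial (Fin (K + 2)) (ZMod 2)) ^ 2 ^ ((j : ℕ) + (K + 1 - (i : ℕ)))) =
      ∏ v : Fin (K + 2), (X v) ^ 2 ^ ((j : ℕ) + (K + 1 - ((g j).symm v : ℕ))) := by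
    intro j
    exact perm_prod (g j) (fun i => 2 ^ ((j : ℕ) + (K + 1 - (i : ℕ))))
  rw [Finset.prod_congr rfl fun j _ => hU j]
  rw [perm_prod ψ (fun i => K + 1 - (i : ℕ))]
  rw [Finset.prod_comm]
  rw [← Finset.prod_mul_distrib]
  refine Finset.prod_congr rfl fun v _ => ?_
  rw [Finset.prod_pow_eq_pow_sum, ← pow_add]
  rfl

end Stmt19Aux

open Stmt19Aux in
/-- With `m = 2^{q+1} − 1`, `d = U(m;k) = 2^{q+k−1} + 2^q − 1`, `q ≥ 1`, `k ≥ 2`, the product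
`[∑_σ u_{σ(1)}^{2^{k−1}}⋯u_{σ(k)}]^{2^q} · [∑_τ u_{τ(1)}^{2^{k−1}}⋯u_{τ(k)}]^{2^q−1} ·
[∑_ψ u_{ψ(1)}^{k−1}⋯u_{ψ(k)}^0]` vanishes in the truncated polynomial ring: the polynomial
method fails to prove `Δ^⟂(2^{q+1}−1;k) ≤ U(2^{q+1}−1;k)` (Remark 4). -/
theorem stmt19 (q k : ℕ) (hq : 1 ≤ q) (hk : 2 ≤ k) :
    Ideal.Quotient.mk (truncIdeal k (2 ^ (q + k - 1) + 2 ^ q - 1))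
        ((∑ σ : Equiv.Perm (Fin k), ∏ i : Fin k, X (σ i) ^ (2 ^ (k - 1 - (i : ℕ)))) ^ (2 ^ q) *
          (∑ τ : Equiv.Perm (Fin k), ∏ i : Fin k, X (τ i) ^ (2 ^ (k - 1 - (i : ℕ)))) ^
            (2 ^ q - 1) *
          (∑ ψ : Equiv.Perm (Fin k), ∏ i : Fin k, X (ψ i) ^ (k - 1 - (i : ℕ)))) = 0 := by
  classical
  obtain ⟨Q, rfl⟩ : ∃ Q, q = Q + 1 := ⟨q - 1, by omega⟩
  obtain ⟨K, rfl⟩ : ∃ K, k = K + 2 := ⟨k - 2, by omega⟩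
  have hd : 2 ^ (Q + 1 + (K + 2) - 1) + 2 ^ (Q + 1) - 1 = dd K Q := by
    rw [show Q + 1 + (K + 2) - 1 = Q + K + 2 by omega]; rfl
  rw [hd]
  rw [show K + 2 - 1 = K + 1 by omega]
  rw [expansion]
  rw [map_sum]
  rw [← Finset.sum_filter_add_sum_filter_not Finset.univ
    (fun γ : Gam K Q => ∀ v, Efun γ v ≤ dd K Q)]
  have hdead : ∀ γ : Gam K Q, ¬(∀ v, Efun γ v ≤ dd K Q) →
      Ideal.Quotient.mk (truncIdeal (K + 2) (dd K Q)) (Term γ) = 0 := by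
    intro γ hγ
    push_neg at hγ
    obtain ⟨v0, hv0⟩ := hγ
    rw [Ideal.Quotient.eq_zero_iff_mem]
    have hX : (X v0 : MvPolynomial (Fin (K + 2)) (ZMod 2)) ^ (dd K Q + 1) ∈
        truncIdeal (K + 2) (dd K Q) := Ideal.subset_span ⟨v0, rfl⟩
    have hT : Term γ = (X v0 : MvPolynomial (Fin (K + 2)) (ZMod 2)) ^ (dd K Q + 1) *
        ((X v0) ^ (Efun γ v0 - (dd K Q + 1)) *
          ∏ v ∈ Finset.univ.erase v0, (X v : MvPolynomial (Fin (K + 2)) (ZMod 2)) ^ Efun γ v) := by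
      rw [Term, ← Finset.mul_prod_erase Finset.univ _ (Finset.mem_univ v0), ← mul_assoc,
        ← pow_add]
      congr 2
      omega
    rw [hT]
    exact Ideal.mul_mem_right _ _ hX
  have hzero2 : (∑ γ ∈ Finset.univ.filter
      (fun γ : Gam K Q => ¬∀ v, Efun γ v ≤ dd K Q),
      Ideal.Quotient.mk (truncIdeal (K + 2) (dd K Q)) (Term γ)) = 0 := by
    refine Finset.sum_eq_zero fun γ hγ => ?_
    exact hdead γ (Finset.mem_filter.mp hγ).2
  have hzero1 : (∑ γ ∈ Finset.univ.filter
      (fun γ : Gam K Q => ∀ v, Efun γ v ≤ dd K Q),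
      Ideal.Quotient.mk (truncIdeal (K + 2) (dd K Q)) (Term γ)) = 0 := by
    refine Finset.sum_involution (fun γ _ => invol γ) ?_ ?_ ?_ ?_
    · intro γ hγ
      have hs : ∀ v, Efun γ v ≤ dd K Q := (Finset.mem_filter.mp hγ).2
      have hT : Term (invol γ) = Term γ := by
        by_cases hF : Fcond γ
        · rw [invol_eq_inv2 hF]
          exact Finset.prod_congr rfl fun v _ => by rw [Epres2 hs hF v]
        · rw [invol_eq_inv1 hF]
          exact Finset.prod_congr rfl fun v _ => by rw [Epres1 hs v]
      show Ideal.Quotient.mk (truncIdeal (K + 2) (dd K Q)) (Term γ) +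
        Ideal.Quotient.mk (truncIdeal (K + 2) (dd K Q)) (Term (invol γ)) = 0
      rw [hT, ← map_add, CharTwo.add_self_eq_zero, map_zero]
    · intro γ hγ _
      show invol γ ≠ γ
      by_cases hF : Fcond γ
      · rw [invol_eq_inv2 hF]; exact inv2_ne γ
      · rw [invol_eq_inv1 hF]; exact inv1_ne hF
    · intro γ hγ
      have hs : ∀ v, Efun γ v ≤ dd K Q := (Finset.mem_filter.mp hγ).2
      show invol γ ∈ Finset.univ.filter (fun γ : Gam K Q => ∀ v, Efun γ v ≤ dd K Q)
      refine Finset.mem_filter.mpr ⟨Finset.mem_univ _, fun v => ?_⟩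
      by_cases hF : Fcond γ
      · rw [invol_eq_inv2 hF, Epres2 hs hF v]; exact hs v
      · rw [invol_eq_inv1 hF, Epres1 hs v]; exact hs v
    · intro γ hγ
      show invol (invol γ) = γ
      by_cases hF : Fcond γ
      · rw [invol_eq_inv2 hF, invol_eq_inv2 (Fcond_inv2 hF), inv2_inv2]
      · rw [invol_eq_inv1 hF, invol_eq_inv1 (fun h => hF ((Fcond_inv1 γ).mp h)), inv1_inv1]
  rw [hzero1, hzero2, add_zero]
end
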